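/- arXiv:1303.2564 — 6 statements merged into one kernel-verified Lean document; each statement's English description precedes it below -/
import Mathlib

section
/- Let b_0, b_1, b_2 be real numbers with b_0 ≠ 0 and b_2 ≠ 0. If f is a rational function satisfying x/(b_0 + b_1 x + b_2 x^2) = f(x)/(b_0 + b_1 f(x) + b_2 f(x)^2) (as an identity of rational functions), then f(x) = x or f(x) = b_0/(b_2 x). Conversely, both f_1(x) = x and f_2(x) = b_0/(b_2 x) satisfy this identity. -/
open Polynomial Finset
open scoped Classical

/-- A set of vertices is independent if its elements are pairwise non-adjacent. -/
def IsIndepSet {V : Type*} (G : SimpleGraph V) (s : Finset V) : Prop :=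
  ∀ u ∈ s, ∀ v ∈ s, u ≠ v → ¬ G.Adj u v

/-- The independence number: maximum cardinality of an independent set. -/
noncomputable def indepNum {V : Type*} [Fintype V] (G : SimpleGraph V) : ℕ :=
  (Finset.univ.filter (fun s : Finset V => IsIndepSet G s)).sup Finset.card

/-- The number of independent sets of cardinality `k`. -/
noncomputable def indepCount {V : Type*} [Fintype V] (G : SimpleGraph V) (k : ℕ) : ℕ :=
  (Finset.univ.filter (fun s : Finset V => IsIndepSet G s ∧ s.card = k)).card

/-- The independence polynomial `I(G;x) = ∑ s_k x^k`. -/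
noncomputable def indepPoly {V : Type*} [Fintype V] (G : SimpleGraph V) : Polynomial ℝ :=
  ∑ k ∈ Finset.range (indepNum G + 1), Polynomial.C (indepCount G k : ℝ) * Polynomial.X ^ k

/-- The corona `G ∘ H`: take `G` together with `|V(G)|` disjoint copies of `H`,
joining each vertex `v` of `G` to all vertices of the `v`-th copy of `H`. -/
def corona {V W : Type*} (G : SimpleGraph V) (H : SimpleGraph W) :
    SimpleGraph (V ⊕ V × W) where
  Adj x y :=
    match x, y with
    | Sum.inl u, Sum.inl v => G.Adj u v
    | Sum.inl u, Sum.inr (v, _) => u = v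
    | Sum.inr (v, _), Sum.inl u => u = v
    | Sum.inr (v, w), Sum.inr (v', w') => v = v' ∧ H.Adj w w'
  symm := by
    constructor
    rintro (u | ⟨v, w⟩) (u' | ⟨v', w'⟩) h
    · exact G.adj_symm h
    · exact h
    · exact h
    · exact ⟨h.1.symm, H.adj_symm h.2⟩
  loopless := by
    constructor
    rintro (u | ⟨v, w⟩) h
    · exact G.irrefl h
    · exact H.irrefl h.2

/-- The disjoint union of two graphs. -/
def disjUnion {V W : Type*} (G : SimpleGraph V) (H : SimpleGraph W) :
    SimpleGraph (V ⊕ W) where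
  Adj x y :=
    match x, y with
    | Sum.inl a, Sum.inl b => G.Adj a b
    | Sum.inr a, Sum.inr b => H.Adj a b
    | _, _ => False
  symm := by
    constructor
    rintro (a | a) (b | b) h
    · exact G.adj_symm h
    · exact h.elim
    · exact h.elim
    · exact H.adj_symm h
  loopless := by
    constructor
    rintro (a | a) h
    · exact G.irrefl h
    · exact H.irrefl h

/-- The Zykov sum (join) of two graphs. -/
def zykovSum {V W : Type*} (G : SimpleGraph V) (H : SimpleGraph W) :
    SimpleGraph (V ⊕ W) where
  Adj x y :=
    match x, y with
    | Sum.inl a, Sum.inl b => G.Adj a b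
    | Sum.inr a, Sum.inr b => H.Adj a b
    | _, _ => True
  symm := by
    constructor
    rintro (a | a) (b | b) h
    · exact G.adj_symm h
    · trivial
    · trivial
    · exact H.adj_symm h
  loopless := by
    constructor
    rintro (a | a) h
    · exact G.irrefl h
    · exact H.irrefl h

/-- `K_p - e`: the complete graph on `Fin p` minus the edge joining vertices `0` and `1`. -/
def completeMinusEdge (p : ℕ) : SimpleGraph (Fin p) where
  Adj a b := a ≠ b ∧ ¬(a.val ≤ 1 ∧ b.val ≤ 1)
  symm := ⟨fun a b ⟨h1, h2⟩ => ⟨h1.symm, fun ⟨hb, ha⟩ => h2 ⟨ha, hb⟩⟩⟩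
  loopless := ⟨fun a ⟨h, _⟩ => h rfl⟩

/-- The clique number of a graph. -/
noncomputable def cliqueNum {V : Type*} [Fintype V] (G : SimpleGraph V) : ℕ :=
  (Finset.univ.filter (fun s : Finset V => G.IsClique ↑s)).sup Finset.card

/-- A graph is perfect if every induced subgraph has chromatic number
equal to its clique number. -/
def IsPerfect {V : Type*} [Fintype V] (G : SimpleGraph V) : Prop :=
  ∀ s : Set V, (G.induce s).chromaticNumber = (cliqueNum (G.induce s) : ℕ∞)

/-- The coefficient sequence `(a_0, …, a_n)` of a polynomial (indexed up to its
degree `n`) is symmetric, i.e. `a_i = a_{n-i}`. -/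
def CoeffSymmetric (P : Polynomial ℝ) : Prop :=
  ∀ i ≤ P.natDegree, P.coeff i = P.coeff (P.natDegree - i)

/-- The coefficient sequence of a polynomial is unimodal with mode `k`. -/
def IsMode (P : Polynomial ℝ) (k : ℕ) : Prop :=
  k ≤ P.natDegree ∧ (∀ i, i < k → P.coeff i ≤ P.coeff (i + 1)) ∧
    (∀ i, k ≤ i → i < P.natDegree → P.coeff (i + 1) ≤ P.coeff i)

/-- The coefficient sequence of a polynomial is unimodal. -/
def CoeffUnimodal (P : Polynomial ℝ) : Prop :=
  ∃ k, IsMode P k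

/-- `k` is the unique index achieving the maximal coefficient of `P`. -/
def IsUniqueMode (P : Polynomial ℝ) (k : ℕ) : Prop :=
  k ≤ P.natDegree ∧ ∀ j ≤ P.natDegree, j ≠ k → P.coeff j < P.coeff k

/-- The polynomial has a unique mode. -/
def HasUniqueMode (P : Polynomial ℝ) : Prop :=
  ∃ k, IsUniqueMode P k

/-- Cross-multiplying the invariance equation leaves this product; its two factors give the two
invariants `x` and `b0 / (b2 * x)`. -/
theorem mul_quadratic_sub_mul_quadratic {R : Type*} [CommRing R] (b0 b1 b2 x f : R) :
    x * (b0 + b1 * f + b2 * f ^ 2) - f * (b0 + b1 * x + b2 * x ^ 2) =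
      (f - x) * (b2 * x * f - b0) := by
  ring

section Field

variable {K : Type*} [Field K] {b0 b1 b2 x f : K}

theorem quadratic_at_div_mul (hb2 : b2 ≠ 0) (hx : x ≠ 0) :
    b0 + b1 * (b0 / (b2 * x)) + b2 * (b0 / (b2 * x)) ^ 2 =
      b0 * (b0 + b1 * x + b2 * x ^ 2) / (b2 * x ^ 2) := by
  field_simp
  ring

theorem eq_or_eq_div_of_div_quadratic_eq (hb2 : b2 ≠ 0) (hx : x ≠ 0)
    (hqx : b0 + b1 * x + b2 * x ^ 2 ≠ 0)
    (h : x / (b0 + b1 * x + b2 * x ^ 2) = f / (b0 + b1 * f + b2 * f ^ 2)) :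
    f = x ∨ f = b0 / (b2 * x) := by
  have hqf : b0 + b1 * f + b2 * f ^ 2 ≠ 0 := by
    intro hqf
    rw [hqf, div_zero] at h
    exact div_ne_zero hx hqx h
  have hcross := (div_eq_div_iff hqx hqf).mp h
  have hfactor : (f - x) * (b2 * x * f - b0) = 0 := by
    rw [← mul_quadratic_sub_mul_quadratic, hcross, sub_self]
  refine (mul_eq_zero.mp hfactor).imp sub_eq_zero.mp fun hf => ?_
  rw [eq_div_iff (mul_ne_zero hb2 hx)]
  linear_combination sub_eq_zero.mp hf

theorem div_quadratic_eq_of_eq_div (hb0 : b0 ≠ 0) (hb2 : b2 ≠ 0) (hx : x ≠ 0) :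
    x / (b0 + b1 * x + b2 * x ^ 2) =
      b0 / (b2 * x) / (b0 + b1 * (b0 / (b2 * x)) + b2 * (b0 / (b2 * x)) ^ 2) := by
  rw [quadratic_at_div_mul hb2 hx]
  field_simp

theorem div_quadratic_eq_div_quadratic_iff (hb0 : b0 ≠ 0) (hb2 : b2 ≠ 0) (hx : x ≠ 0)
    (hqx : b0 + b1 * x + b2 * x ^ 2 ≠ 0) :
    x / (b0 + b1 * x + b2 * x ^ 2) = f / (b0 + b1 * f + b2 * f ^ 2) ↔
      f = x ∨ f = b0 / (b2 * x) := by
  refine ⟨eq_or_eq_div_of_div_quadratic_eq hb2 hx hqx, ?_⟩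
  rintro (rfl | rfl)
  · rfl
  · exact div_quadratic_eq_of_eq_div hb0 hb2 hx

end Field

theorem RatFunc.C_add_C_mul_X_add_C_mul_X_sq_ne_zero {K : Type*} [Field K] {a : K}
    (b c : K) (ha : a ≠ 0) :
    RatFunc.C a + RatFunc.C b * RatFunc.X + RatFunc.C c * RatFunc.X ^ 2 ≠ 0 := by
  have hp : Polynomial.C a + Polynomial.C b * Polynomial.X + Polynomial.C c * Polynomial.X ^ 2
      ≠ 0 := fun hp => ha (by simpa using congrArg (Polynomial.coeff · 0) hp)
  simpa using RatFunc.algebraMap_ne_zero hp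

/-- the rational function `x / (b₀ + b₁ x + b₂ x²)` admits exactly two
invariants, namely `f₁(x) = x` and `f₂(x) = b₀/(b₂ x)`. -/
theorem invariants_of_quadratic_rational_function (b0 b1 b2 : ℝ)
    (hb0 : b0 ≠ 0) (hb2 : b2 ≠ 0) (f : RatFunc ℝ) :
    (RatFunc.X / (RatFunc.C b0 + RatFunc.C b1 * RatFunc.X + RatFunc.C b2 * RatFunc.X ^ 2) =
        f / (RatFunc.C b0 + RatFunc.C b1 * f + RatFunc.C b2 * f ^ 2)) ↔
      (f = RatFunc.X ∨ f = RatFunc.C b0 / (RatFunc.C b2 * RatFunc.X)) :=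
  div_quadratic_eq_div_quadratic_iff (by simpa using hb0) (by simpa using hb2) RatFunc.X_ne_zero
    (RatFunc.C_add_C_mul_X_add_C_mul_X_sq_ne_zero b1 b2 hb0)
end

section
/- Let G be a finite simple graph of order n ≥ 1, and let H be a finite simple graph with p vertices and q edges such that α(H) = 2. Set m = p(p−1)/2 − q and α = α(G∘H) and write I(G∘H;x) = Σ_{i=0}^{α} s_i x^i. Then s_{α−i} = m^{α/2 − i} · s_i for every i with 0 ≤ i ≤ α; that is, I(G∘H;x) is f-symmetric with f(i) = (p(p−1)/2 − q)^{α/2 − i}. -/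
open Polynomial Finset
open scoped Classical

/-!
An independent set of `G ∘ H` is an independent set `A` of `G` together with an independent set
of the `v`-th copy of `H` for every `v`, empty when `v ∈ A`. Hence
`I(G ∘ H; x) = ∑_A x^|A| I(H; x)^(n - |A|)`. When `α(H) = 2`, `I(H; x) = 1 + p x + m x²`, where
`m = C(p, 2) - q` counts the non-edges of `H`. Call `P` `m`-palindromic of weight `k` if
`m^k x^(2k) P(1/(m x)) = P(x)`. Both `x` and `I(H; x)` have this property with weight `1`, and it
is preserved by products (weights add) and by sums of equal weight. So `I(G ∘ H; x)` has it with
weight `n`, which on coefficients says `m^i s_(2n-i) = m^n s_i`; at `i = 0` it also shows that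
`α(G ∘ H) = 2n`.
-/

theorem Finset.prod_ite_mem_one_eq_pow_card_compl {α M : Type*} [Fintype α] [CommMonoid M]
    (A : Finset α) (a : M) : ∏ x, (if x ∈ A then 1 else a) = a ^ #Aᶜ := by
  simp [prod_ite, filter_notMem_eq_sdiff, compl_eq_univ_sdiff]

namespace Polynomial

variable {R : Type*} [CommSemiring R]

/-- On coefficients: `m ^ i * P.coeff (2 * k - i) = m ^ k * P.coeff i` for `i ≤ 2 * k`, i.e.
`f`-symmetry with `f i = m ^ (k - i)` when `m` is a unit. Phrased through `reflect` so that it is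
visibly multiplicative. -/
def IsScaledPalindromic (m : R) (k : ℕ) (P : R[X]) : Prop :=
  P.natDegree ≤ 2 * k ∧ (P.reflect (2 * k)).comp (C m * X) = C (m ^ k) * P

theorem isScaledPalindromic_zero (m : R) (k : ℕ) : IsScaledPalindromic m k (0 : R[X]) := by
  simp [IsScaledPalindromic]

theorem isScaledPalindromic_one (m : R) : IsScaledPalindromic m 0 (1 : R[X]) := by
  simp [IsScaledPalindromic]

theorem isScaledPalindromic_X (m : R) : IsScaledPalindromic m 1 (X : R[X]) := by
  refine ⟨natDegree_X_le.trans (by norm_num), ?_⟩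
  rw [← pow_one (X : R[X]), reflect_monomial, revAt_le (by norm_num)]
  simp

theorem isScaledPalindromic_quadratic (m a b : R) :
    IsScaledPalindromic m 1 (C (m * a) * X ^ 2 + C b * X + C a) := by
  refine ⟨natDegree_quadratic_le, ?_⟩
  have h₁ : reflect 2 (C b * X) = C b * X := by
    simpa [revAt_le] using reflect_C_mul_X_pow (c := b) 2 1
  have h₂ : revAt 2 2 = 0 := revAt_le le_rfl
  rw [mul_one]
  simp only [reflect_add, reflect_C_mul_X_pow, reflect_C, h₁, h₂]
  simp only [add_comp, mul_comp, C_comp, X_pow_comp, X_comp, C_mul, C_pow]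
  ring

namespace IsScaledPalindromic

variable {m : R} {k l : ℕ} {P Q : R[X]}

theorem add (hP : IsScaledPalindromic m k P) (hQ : IsScaledPalindromic m k Q) :
    IsScaledPalindromic m k (P + Q) :=
  ⟨(natDegree_add_le _ _).trans (max_le hP.1 hQ.1), by
    rw [reflect_add, add_comp, hP.2, hQ.2, mul_add]⟩

theorem mul (hP : IsScaledPalindromic m k P) (hQ : IsScaledPalindromic m l Q) :
    IsScaledPalindromic m (k + l) (P * Q) := by
  refine ⟨natDegree_mul_le.trans (by rw [mul_add]; exact add_le_add hP.1 hQ.1), ?_⟩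
  rw [mul_add, reflect_mul _ _ hP.1 hQ.1, mul_comp, hP.2, hQ.2, pow_add, C_mul]
  ring

theorem pow (hP : IsScaledPalindromic m k P) (n : ℕ) :
    IsScaledPalindromic m (k * n) (P ^ n) := by
  induction n with
  | zero => exact isScaledPalindromic_one m
  | succ n ih => exact pow_succ P n ▸ ih.mul hP

theorem sum {ι : Type*} {s : Finset ι} {f : ι → R[X]}
    (hf : ∀ i ∈ s, IsScaledPalindromic m k (f i)) :
    IsScaledPalindromic m k (∑ i ∈ s, f i) :=
  Finset.sum_induction f _ (fun _ _ => add) (isScaledPalindromic_zero m k) hf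

theorem coeff_eq (hP : IsScaledPalindromic m k P) {i : ℕ} (hi : i ≤ 2 * k) :
    m ^ i * P.coeff (2 * k - i) = m ^ k * P.coeff i := by
  have := congrArg (coeff · i) hP.2
  simp only [comp_C_mul_X_coeff, coeff_reflect, revAt_le hi, coeff_C_mul] at this
  rw [← this, mul_comm]

theorem natDegree_eq (hP : IsScaledPalindromic m k P) (h : m ^ k * P.coeff 0 ≠ 0) :
    P.natDegree = 2 * k := by
  refine le_antisymm hP.1 (le_natDegree_of_ne_zero ?_)
  simpa [← hP.coeff_eq (Nat.zero_le _)] using h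

end IsScaledPalindromic

end Polynomial

section IndependentSets

variable {V : Type*} (G : SimpleGraph V)

@[simp]
theorem isIndepSet_empty : IsIndepSet G ∅ := by
  simp [IsIndepSet]

theorem isIndepSet_singleton (v : V) : IsIndepSet G {v} := by
  simp +contextual [IsIndepSet]

theorem isIndepSet_pair_iff {x y : V} : IsIndepSet G {x, y} ↔ ¬G.Adj x y := by
  simp +contextual [IsIndepSet, G.adj_comm y x]
  exact ⟨fun h hadj => h.1 (G.ne_of_adj hadj) hadj, fun h => ⟨fun _ => h, fun _ => h⟩⟩

variable [Fintype V]

theorem card_le_indepNum {s : Finset V} (hs : IsIndepSet G s) : #s ≤ indepNum G :=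
  le_sup (by simpa using hs)

theorem exists_isIndepSet_card_eq_indepNum : ∃ s, IsIndepSet G s ∧ #s = indepNum G := by
  obtain ⟨s, hs, h⟩ := exists_mem_eq_sup (univ.filter (IsIndepSet G)) ⟨∅, by simp⟩ card
  exact ⟨s, by simpa using hs, h.symm⟩

theorem indepCount_eq_zero_of_indepNum_lt {k : ℕ} (hk : indepNum G < k) : indepCount G k = 0 := by
  rw [indepCount, card_eq_zero, filter_eq_empty_iff]
  rintro s - ⟨hs, rfl⟩
  exact hk.not_ge (card_le_indepNum G hs)

theorem indepCount_indepNum_pos : 0 < indepCount G (indepNum G) := by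
  obtain ⟨s, hs, hcard⟩ := exists_isIndepSet_card_eq_indepNum G
  exact card_pos.mpr ⟨s, by simp [hs, hcard]⟩

theorem indepCount_zero : indepCount G 0 = 1 := by
  rw [indepCount, card_eq_one]
  exact ⟨∅, by ext s; simp +contextual⟩

theorem indepCount_one : indepCount G 1 = Fintype.card V := by
  have : univ.filter (fun s => IsIndepSet G s ∧ #s = 1) =
      univ.map ⟨singleton, singleton_injective⟩ := by
    ext s
    simp only [mem_filter, mem_univ, true_and, mem_map, Function.Embedding.coeFn_mk, card_eq_one]
    constructor
    · rintro ⟨-, a, rfl⟩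
      exact ⟨a, rfl⟩
    · rintro ⟨a, rfl⟩
      exact ⟨isIndepSet_singleton G a, a, rfl⟩
  rw [indepCount, this, card_map, card_univ]

theorem coeff_indepPoly (k : ℕ) : (indepPoly G).coeff k = indepCount G k := by
  simp only [indepPoly, finsetSum_coeff, coeff_C_mul_X_pow, sum_ite_eq, mem_range]
  split_ifs with hk
  · rfl
  · rw [indepCount_eq_zero_of_indepNum_lt G (by omega), Nat.cast_zero]

theorem natDegree_indepPoly : (indepPoly G).natDegree = indepNum G := by
  refine le_antisymm (natDegree_le_iff_coeff_eq_zero.mpr fun k hk => ?_)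
    (le_natDegree_of_ne_zero ?_)
  · rw [coeff_indepPoly, indepCount_eq_zero_of_indepNum_lt G (by exact_mod_cast hk), Nat.cast_zero]
  · simpa [coeff_indepPoly] using (indepCount_indepNum_pos G).ne'

theorem indepPoly_eq_of_indepNum_eq_two (h : indepNum G = 2) :
    indepPoly G = C (indepCount G 2 : ℝ) * X ^ 2 + C (Fintype.card V : ℝ) * X + C 1 := by
  simp [indepPoly, h, sum_range_succ, indepCount_zero, indepCount_one]
  ring

theorem indepPoly_eq_sum : indepPoly G = ∑ s, if IsIndepSet G s then X ^ #s else 0 := by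
  ext k
  simp only [coeff_indepPoly, finsetSum_coeff, apply_ite (coeff · k), coeff_X_pow, coeff_zero]
  rw [indepCount, card_filter, Nat.cast_sum]
  refine sum_congr rfl fun s _ => ?_
  by_cases hs : IsIndepSet G s <;> simp [hs, eq_comm]

theorem sum_ite_isIndepSet_imp_eq_empty (P : Prop) [Decidable P] :
    ∑ s, (if (P → s = ∅) ∧ IsIndepSet G s then (X : ℝ[X]) ^ #s else 0) =
      if P then 1 else indepPoly G := by
  by_cases hP : P <;> simp [hP, indepPoly_eq_sum, ite_and]

theorem card_edgeFinset_eq_card_filter_not_isIndepSet :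
    #G.edgeFinset = #((powersetCard 2 univ).filter fun s => ¬IsIndepSet G s) := by
  refine card_bij (fun e _ => e.toFinset) (fun e he => ?_) (fun e _ e' _ h => ?_) (fun s hs => ?_)
  · induction e with
    | h x y =>
      rw [SimpleGraph.mem_edgeFinset, SimpleGraph.mem_edgeSet] at he
      simp [Sym2.toFinset_mk_eq, card_pair (G.ne_of_adj he), isIndepSet_pair_iff, he]
  · exact Sym2.ext fun v => by rw [← Sym2.mem_toFinset, h, Sym2.mem_toFinset]
  · simp only [mem_filter, mem_powersetCard_univ, card_eq_two] at hs
    obtain ⟨⟨x, y, -, rfl⟩, hxy⟩ := hs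
    rw [isIndepSet_pair_iff, not_not] at hxy
    exact ⟨s(x, y), by simpa using hxy, Sym2.toFinset_mk_eq⟩

theorem indepCount_two_add_card_edgeFinset :
    indepCount G 2 + #G.edgeFinset = (Fintype.card V).choose 2 := by
  rw [card_edgeFinset_eq_card_filter_not_isIndepSet, ← card_univ, ← card_powersetCard,
    ← card_filter_add_card_filter_not (s := powersetCard 2 univ) (p := IsIndepSet G), indepCount]
  congr 2
  ext s
  simp [and_comm]

end IndependentSets

section Corona

variable {V W : Type*} [Fintype V] [Fintype W]

noncomputable def finsetProdEquivPi : Finset (V × W) ≃ (V → Finset W) where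
  toFun t v := univ.filter fun w => (v, w) ∈ t
  invFun f := univ.filter fun x => x.2 ∈ f x.1
  left_inv t := by ext; simp
  right_inv f := by ext; simp

@[simp]
theorem mem_finsetProdEquivPi_symm {f : V → Finset W} {x : V × W} :
    x ∈ finsetProdEquivPi.symm f ↔ x.2 ∈ f x.1 := by
  simp [finsetProdEquivPi]

theorem card_finsetProdEquivPi_symm (f : V → Finset W) :
    #(finsetProdEquivPi.symm f) = ∑ v, #(f v) := by
  simp only [finsetProdEquivPi, Equiv.coe_fn_symm_mk, card_filter, Fintype.sum_prod_type]
  simp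

variable (G : SimpleGraph V) (H : SimpleGraph W)

theorem isIndepSet_corona_disjSum_iff (A : Finset V) (f : V → Finset W) :
    IsIndepSet (corona G H) (A.disjSum (finsetProdEquivPi.symm f)) ↔
      IsIndepSet G A ∧ ∀ v, (v ∈ A → f v = ∅) ∧ IsIndepSet H (f v) := by
  constructor
  · intro h
    refine ⟨fun u hu v hv huv hadj => h (.inl u) (by simpa) (.inl v) (by simpa) (by simpa) hadj,
      fun v => ⟨fun hv => eq_empty_of_forall_notMem fun w hw => ?_,
        fun w hw w' hw' hww hadj => h (.inr (v, w)) (by simpa) (.inr (v, w')) (by simpa)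
          (by simpa) ⟨rfl, hadj⟩⟩⟩
    exact h (.inl v) (by simpa) (.inr (v, w)) (by simpa) (by simp) rfl
  · rintro ⟨hA, hf⟩ (u | ⟨v, w⟩) hx (u' | ⟨v', w'⟩) hy hne hadj <;>
      simp only [inl_mem_disjSum, inr_mem_disjSum, mem_finsetProdEquivPi_symm] at hx hy
    · exact hA u hx u' hy (by simpa using hne) hadj
    · obtain rfl : u = v' := hadj
      simp [(hf u).1 hx] at hy
    · obtain rfl : u' = v := hadj
      simp [(hf u').1 hy] at hx
    · obtain ⟨rfl, hadj⟩ : v = v' ∧ H.Adj w w' := hadj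
      exact (hf v).2 w hx w' hy (by simpa using hne) hadj

theorem indepPoly_corona :
    indepPoly (corona G H) = ∑ A ∈ univ.filter (IsIndepSet G), X ^ #A * indepPoly H ^ #Aᶜ := by
  let e : Finset (V ⊕ V × W) ≃ Finset V × (V → Finset W) :=
    Finset.sumEquiv.toEquiv.trans ((Equiv.refl _).prodCongr finsetProdEquivPi)
  have he (A : Finset V) (f : V → Finset W) :
      e.symm (A, f) = A.disjSum (finsetProdEquivPi.symm f) := rfl
  rw [indepPoly_eq_sum, ← e.symm.sum_comp, Fintype.sum_prod_type, sum_filter]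
  refine sum_congr rfl fun A _ => ?_
  simp only [he, isIndepSet_corona_disjSum_iff, card_disjSum, card_finsetProdEquivPi_symm]
  split_ifs with hA
  · rw [← prod_ite_mem_one_eq_pow_card_compl,
      ← prod_congr rfl fun v _ => sum_ite_isIndepSet_imp_eq_empty H (v ∈ A), Fintype.prod_sum,
      mul_sum]
    refine sum_congr rfl fun f _ => ?_
    rw [prod_ite_zero, prod_pow_eq_pow_sum, pow_add]
    simp only [hA, true_and, mem_univ, forall_const]
    split_ifs <;> simp
  · simp [hA]

theorem isScaledPalindromic_indepPoly_corona (hH : indepNum H = 2) :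
    IsScaledPalindromic (indepCount H 2 : ℝ) (Fintype.card V) (indepPoly (corona G H)) := by
  have hP : IsScaledPalindromic (indepCount H 2 : ℝ) 1 (indepPoly H) := by
    simpa [indepPoly_eq_of_indepNum_eq_two H hH] using
      isScaledPalindromic_quadratic (indepCount H 2 : ℝ) 1 (Fintype.card W)
  rw [indepPoly_corona]
  refine IsScaledPalindromic.sum fun A _ => ?_
  simpa [card_add_card_compl] using ((isScaledPalindromic_X _).pow #A).mul (hP.pow #Aᶜ)

end Corona

theorem natCast_choose_two_eq_ediv (p : ℕ) : ((p.choose 2 : ℕ) : ℤ) = p * (p - 1) / 2 := by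
  rw [Nat.choose_two_right, Int.natCast_div]
  cases p <;> simp

theorem corona_indepPoly_f_symmetric_general {V W : Type*} [Fintype V] [Fintype W]
    (G : SimpleGraph V) (H : SimpleGraph W)
    (p q : ℕ) (hp : Fintype.card W = p) (hq : Fintype.card H.edgeSet = q)
    (hH : indepNum H = 2) (m : ℤ)
    (hm : m = (p : ℤ) * ((p : ℤ) - 1) / 2 - (q : ℤ)) :
    ∀ i ≤ indepNum (corona G H),
      (indepCount (corona G H) (indepNum (corona G H) - i) : ℚ) =
        (m : ℚ) ^ (((indepNum (corona G H) / 2 : ℕ) : ℤ) - (i : ℤ)) *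
          (indepCount (corona G H) i : ℚ) := by
  intro i hi
  have hsym := isScaledPalindromic_indepPoly_corona G H hH
  have hpos : 0 < indepCount H 2 := hH ▸ indepCount_indepNum_pos H
  have hα : indepNum (corona G H) = 2 * Fintype.card V := by
    rw [← natDegree_indepPoly,
      hsym.natDegree_eq (by simp [coeff_indepPoly, indepCount_zero, hpos.ne'])]
  have hm_count : m = indepCount H 2 := by
    have := indepCount_two_add_card_edgeFinset H
    rw [← SimpleGraph.card_edgeSet, hq, hp] at this
    rw [hm, ← natCast_choose_two_eq_ediv, ← this]
    push_cast
    ring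
  rw [hα] at hi ⊢
  have hcoeff := hsym.coeff_eq hi
  simp only [coeff_indepPoly] at hcoeff
  rw [Nat.mul_div_cancel_left _ two_pos, hm_count, zpow_sub₀ (by positivity), zpow_natCast,
    zpow_natCast, div_mul_eq_mul_div, eq_div_iff (by positivity)]
  exact_mod_cast (mul_comm _ _).trans hcoeff

/-- if `α(H) = 2`, `H` has `p` vertices and `q` edges, then `I(G∘H;x)` is
`f`-symmetric with `f(i) = (p(p-1)/2 - q)^{α/2 - i}`, i.e.
`s_{α-i} = m^{α/2-i} s_i` for all `0 ≤ i ≤ α`, where `m = p(p-1)/2 - q`. -/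
theorem corona_indepPoly_f_symmetric {V W : Type*} [Fintype V] [Fintype W]
    (G : SimpleGraph V) (H : SimpleGraph W) (hn : 1 ≤ Fintype.card V)
    (p q : ℕ) (hp : Fintype.card W = p) (hq : Fintype.card H.edgeSet = q)
    (hH : indepNum H = 2) (m : ℤ)
    (hm : m = (p : ℤ) * ((p : ℤ) - 1) / 2 - (q : ℤ)) :
    ∀ i ≤ indepNum (corona G H),
      (indepCount (corona G H) (indepNum (corona G H) - i) : ℚ) =
        (m : ℚ) ^ (((indepNum (corona G H) / 2 : ℕ) : ℤ) - (i : ℤ)) *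
          (indepCount (corona G H) i : ℚ) :=
  corona_indepPoly_f_symmetric_general G H p q hp hq hH m hm
end

section
/- For every finite simple graph G, the independence polynomial I(G∘2K_1; x) of the corona of G with the edgeless graph on two vertices is symmetric. -/
open Polynomial Finset
open scoped Classical

/-!
An independent set of `G ∘ H`, `H` edgeless, is an independent set `A` of `G` together with a set
of pendant vertices lying over `V ∖ A`. Replacing that set of pendants by its complement among all
`|V ∖ A| * |W|` pendants over `V ∖ A` is an involution on independent sets, and it sends a set of
size `k` to one of size `2 |A| + |V ∖ A| * |W| - k`. For `|W| = 2` this is `2 |V| - k` whatever `A`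
is; in particular `α(G ∘ 2K₁) = 2 |V|`.
-/

section CoronaEdgeless

variable {V W : Type*}

theorem isIndepSet_corona_bot_iff (G : SimpleGraph V) (S : Finset (V ⊕ V × W)) :
    IsIndepSet (corona G (⊥ : SimpleGraph W)) S ↔
      IsIndepSet G S.toLeft ∧ ∀ p ∈ S.toRight, p.1 ∉ S.toLeft := by
  constructor
  · intro hS
    refine ⟨fun u hu v hv huv => hS _ (mem_toLeft.1 hu) _ (mem_toLeft.1 hv) (by simpa using huv),
      ?_⟩
    rintro ⟨v, w⟩ hp hv
    exact hS _ (mem_toLeft.1 hv) _ (mem_toRight.1 hp) Sum.inl_ne_inr rfl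
  · rintro ⟨hG, hR⟩ (u | ⟨u, w⟩) hu (v | ⟨v, w'⟩) hv huv hadj
    · exact hG u (mem_toLeft.2 hu) v (mem_toLeft.2 hv) (by rintro rfl; exact huv rfl) hadj
    · obtain rfl : u = v := hadj
      exact hR (u, w') (mem_toRight.2 hv) (mem_toLeft.2 hu)
    · obtain rfl : v = u := hadj
      exact hR (v, w) (mem_toRight.2 hu) (mem_toLeft.2 hv)
    · exact hadj.2

variable [Fintype V] [Fintype W] {G : SimpleGraph V} {S : Finset (V ⊕ V × W)}

theorem IsIndepSet.toRight_subset_compl_toLeft (hS : IsIndepSet (corona G (⊥ : SimpleGraph W)) S) :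
    S.toRight ⊆ S.toLeftᶜ ×ˢ univ := fun p hp => by
  simpa using ((isIndepSet_corona_bot_iff G S).1 hS).2 p hp

noncomputable def complPendants (S : Finset (V ⊕ V × W)) : Finset (V ⊕ V × W) :=
  S.toLeft.disjSum ((S.toLeftᶜ ×ˢ univ) \ S.toRight)

theorem isIndepSet_complPendants (hS : IsIndepSet (corona G (⊥ : SimpleGraph W)) S) :
    IsIndepSet (corona G (⊥ : SimpleGraph W)) (complPendants S) := by
  rw [isIndepSet_corona_bot_iff] at hS ⊢
  simp only [complPendants, toLeft_disjSum, toRight_disjSum]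
  exact ⟨hS.1, fun p hp => by simpa using (mem_sdiff.1 hp).1⟩

theorem complPendants_complPendants (hS : IsIndepSet (corona G (⊥ : SimpleGraph W)) S) :
    complPendants (complPendants S) = S := by
  rw [complPendants, complPendants, toLeft_disjSum, toRight_disjSum,
    Finset.sdiff_sdiff_eq_self hS.toRight_subset_compl_toLeft, toLeft_disjSum_toRight]

theorem card_add_card_complPendants (hS : IsIndepSet (corona G (⊥ : SimpleGraph W)) S) :
    #S + #(complPendants S) = 2 * #S.toLeft + #S.toLeftᶜ * Fintype.card W := by
  have hsub := hS.toRight_subset_compl_toLeft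
  have hle := card_le_card hsub
  rw [card_product, card_univ] at hle
  rw [← card_toLeft_add_card_toRight (u := S), complPendants, card_disjSum,
    card_sdiff_of_subset hsub, card_product, card_univ]
  omega

theorem card_add_card_complPendants_of_card_eq_two (hW : Fintype.card W = 2)
    (hS : IsIndepSet (corona G (⊥ : SimpleGraph W)) S) :
    #S + #(complPendants S) = 2 * Fintype.card V := by
  rw [card_add_card_complPendants hS, hW, ← card_add_card_compl S.toLeft]
  ring

theorem indepNum_corona_bot (G : SimpleGraph V) (hW : Fintype.card W = 2) :
    indepNum (corona G (⊥ : SimpleGraph W)) = 2 * Fintype.card V := by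
  have hempty : IsIndepSet (corona G (⊥ : SimpleGraph W)) ∅ := by simp [IsIndepSet]
  apply le_antisymm
  · refine Finset.sup_le fun S hS => ?_
    have := card_add_card_complPendants_of_card_eq_two hW (mem_filter.1 hS).2
    omega
  · have hcard := card_add_card_complPendants_of_card_eq_two hW hempty
    rw [card_empty, zero_add] at hcard
    exact hcard ▸ le_sup (f := card) (mem_filter.2 ⟨mem_univ _, isIndepSet_complPendants hempty⟩)

theorem indepCount_corona_bot_symm (G : SimpleGraph V) (hW : Fintype.card W = 2) {k : ℕ}
    (hk : k ≤ 2 * Fintype.card V) :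
    indepCount (corona G (⊥ : SimpleGraph W)) k =
      indepCount (corona G (⊥ : SimpleGraph W)) (2 * Fintype.card V - k) := by
  have maps_to {j : ℕ} (hj : j ≤ 2 * Fintype.card V) {S : Finset (V ⊕ V × W)}
      (hS : IsIndepSet (corona G (⊥ : SimpleGraph W)) S ∧ #S = j) :
      IsIndepSet (corona G (⊥ : SimpleGraph W)) (complPendants S) ∧
        #(complPendants S) = 2 * Fintype.card V - j :=
    ⟨isIndepSet_complPendants hS.1,
      by have := card_add_card_complPendants_of_card_eq_two hW hS.1; omega⟩
  unfold indepCount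
  refine card_nbij' complPendants complPendants ?_ ?_ ?_ ?_
  · exact fun S hS => mem_filter.2 ⟨mem_univ _, maps_to hk (mem_filter.1 hS).2⟩
  · intro S hS
    rw [← Nat.sub_sub_self hk]
    exact mem_filter.2 ⟨mem_univ _, maps_to (Nat.sub_le _ k) (mem_filter.1 hS).2⟩
  · exact fun S hS => complPendants_complPendants (mem_filter.1 hS).2.1
  · exact fun S hS => complPendants_complPendants (mem_filter.1 hS).2.1

end CoronaEdgeless

/-- `I(G ∘ 2K₁; x)` is symmetric for every graph `G`. -/
theorem corona_2K1_symmetric {V : Type*} [Fintype V] (G : SimpleGraph V) :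
    ∀ i ≤ indepNum (corona G (⊥ : SimpleGraph (Fin 2))) / 2,
      indepCount (corona G (⊥ : SimpleGraph (Fin 2))) i =
        indepCount (corona G (⊥ : SimpleGraph (Fin 2)))
          (indepNum (corona G (⊥ : SimpleGraph (Fin 2))) - i) := by
  intro i hi
  rw [indepNum_corona_bot G (Fintype.card_fin 2)] at hi ⊢
  exact indepCount_corona_bot_symm G (Fintype.card_fin 2) (by omega)
end

section
/- Let G be a finite simple graph of order n ≥ 1 and let p, q ≥ 1. If G is a perfect graph, then the corona G∘(K_p ∪ K_q) is a perfect graph. -/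
open Polynomial Finset
open scoped Classical

/-!
An induced subgraph of `G ∘ H` meets `G` in an induced subgraph of `G` and the `v`-th copy of `H`
in an induced subgraph of `H`. Colour the former with its clique number `ω` of colours and each
copy with its own clique number of colours. If the root `v` is present, the root together with a
maximum clique of its copy is a clique, so the copy uses fewer than `ω` colours and a spare colour
can be swapped in for the colour of `v`. Finally `K_p ∪ K_q` is perfect, being a disjoint union of
complete graphs.
-/

section Cliques

variable {α β : Type*} {G : SimpleGraph α} {G' : SimpleGraph β}

lemma isClique_map_of_embedding (f : G ↪g G') {t : Finset α} (ht : G.IsClique ↑t) :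
    G'.IsClique ↑(t.map f.toEmbedding) := by
  intro x hx y hy hxy
  simp only [Finset.coe_map, Set.mem_image, Finset.mem_coe] at hx hy
  obtain ⟨a, ha, rfl⟩ := hx
  obtain ⟨b, hb, rfl⟩ := hy
  exact f.map_adj_iff.mpr (ht ha hb fun hab => hxy (hab ▸ rfl))

variable [Fintype α] [Fintype β]

lemma card_le_cliqueNum {t : Finset α} (ht : G.IsClique ↑t) : t.card ≤ cliqueNum G :=
  Finset.le_sup (by simp [ht])

lemma exists_isClique_card_eq_cliqueNum (G : SimpleGraph α) :
    ∃ t : Finset α, G.IsClique ↑t ∧ t.card = cliqueNum G := by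
  obtain ⟨t, ht, hcard⟩ := Finset.exists_mem_eq_sup
    (Finset.univ.filter fun s : Finset α => G.IsClique ↑s) ⟨∅, by simp⟩ Finset.card
  exact ⟨t, (Finset.mem_filter.mp ht).2, hcard.symm⟩

lemma cliqueNum_le_of_embedding (f : G ↪g G') : cliqueNum G ≤ cliqueNum G' := by
  obtain ⟨t, ht, hcard⟩ := exists_isClique_card_eq_cliqueNum G
  rw [← hcard, ← Finset.card_map f.toEmbedding]
  exact card_le_cliqueNum (isClique_map_of_embedding f ht)

lemma cliqueNum_le_chromaticNumber (G : SimpleGraph α) :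
    (cliqueNum G : ℕ∞) ≤ G.chromaticNumber := by
  obtain ⟨t, ht, hcard⟩ := exists_isClique_card_eq_cliqueNum G
  exact hcard ▸ ht.card_le_chromaticNumber

end Cliques

lemma isPerfect_iff_colorable {V : Type*} [Fintype V] {G : SimpleGraph V} :
    IsPerfect G ↔ ∀ s : Set V, (G.induce s).Colorable (cliqueNum (G.induce s)) :=
  forall_congr' fun _ => ⟨fun h => SimpleGraph.chromaticNumber_le_iff_colorable.mp h.le,
    fun h => le_antisymm h.chromaticNumber_le (cliqueNum_le_chromaticNumber _)⟩

lemma isPerfect_top {V : Type*} [Fintype V] : IsPerfect (⊤ : SimpleGraph V) := by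
  refine isPerfect_iff_colorable.mpr fun s => (SimpleGraph.colorable_of_fintype _).mono ?_
  refine card_le_cliqueNum (t := Finset.univ) fun x _ y _ hxy => ?_
  simpa using hxy

lemma disjUnion_eq_sum {V W : Type*} (G : SimpleGraph V) (H : SimpleGraph W) :
    disjUnion G H = G ⊕g H := by
  ext (a | a) (b | b) <;> simp [_root_.disjUnion]

def induceSumIso {V W : Type*} (G : SimpleGraph V) (H : SimpleGraph W) (s : Set (V ⊕ W)) :
    (G ⊕g H).induce s ≃g G.induce (Sum.inl ⁻¹' s) ⊕g H.induce (Sum.inr ⁻¹' s) where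
  toEquiv := Equiv.subtypeSum
  map_rel_iff' := by
    rintro ⟨a | a, ha⟩ ⟨b | b, hb⟩ <;> simp [Equiv.subtypeSum]

lemma IsPerfect.sum {V W : Type*} [Fintype V] [Fintype W] {G : SimpleGraph V}
    {H : SimpleGraph W} (hG : IsPerfect G) (hH : IsPerfect H) : IsPerfect (G ⊕g H) := by
  rw [isPerfect_iff_colorable] at *
  intro s
  let e := induceSumIso G H s
  refine SimpleGraph.Colorable.of_hom e.toHom (SimpleGraph.colorable_sum.mpr ⟨?_, ?_⟩)
  · exact (hG _).mono (cliqueNum_le_of_embedding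
      (e.symm.toEmbedding.comp SimpleGraph.Embedding.sumInl))
  · exact (hH _).mono (cliqueNum_le_of_embedding
      (e.symm.toEmbedding.comp SimpleGraph.Embedding.sumInr))

section Corona

variable {V W : Type*} {G : SimpleGraph V} {H : SimpleGraph W}

@[simp] lemma corona_adj_inl_inr {u v : V} {w : W} :
    (corona G H).Adj (.inl u) (.inr (v, w)) ↔ u = v := Iff.rfl

def coronaFiber (s : Set (V ⊕ V × W)) (v : V) : Set W := {w | Sum.inr (v, w) ∈ s}

def coronaBaseEmbedding (s : Set (V ⊕ V × W)) :
    G.induce (Sum.inl ⁻¹' s) ↪g (corona G H).induce s where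
  toFun x := ⟨.inl x, x.2⟩
  inj' _ _ h := Subtype.ext (Sum.inl_injective (congrArg Subtype.val h))
  map_rel_iff' := Iff.rfl

def coronaFiberEmbedding (s : Set (V ⊕ V × W)) (v : V) :
    H.induce (coronaFiber s v) ↪g (corona G H).induce s where
  toFun w := ⟨.inr (v, w), w.2⟩
  inj' _ _ h := by simpa [Subtype.ext_iff] using h
  map_rel_iff' := and_iff_right rfl

@[simp] lemma coe_coronaFiberEmbedding_apply (s : Set (V ⊕ V × W)) (v : V)
    (w : coronaFiber s v) :
    (coronaFiberEmbedding (G := G) (H := H) s v w : V ⊕ V × W) = .inr (v, w) := rfl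

lemma cliqueNum_coronaFiber_lt [Fintype V] [Fintype W] {s : Set (V ⊕ V × W)} {v : V}
    (hv : Sum.inl v ∈ s) :
    cliqueNum (H.induce (coronaFiber s v)) < cliqueNum ((corona G H).induce s) := by
  obtain ⟨t, ht, hcard⟩ := exists_isClique_card_eq_cliqueNum (H.induce (coronaFiber s v))
  let f := coronaFiberEmbedding (G := G) (H := H) s v
  have hroot : (⟨.inl v, hv⟩ : s) ∉ t.map f.toEmbedding := by simp [f, Subtype.ext_iff]
  have hclique : ((corona G H).induce s).IsClique
      ↑(insert ⟨.inl v, hv⟩ (t.map f.toEmbedding)) := by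
    rw [Finset.coe_insert]
    refine (isClique_map_of_embedding f ht).insert fun x hx _ => ?_
    obtain ⟨w, -, rfl⟩ := Finset.mem_map.mp hx
    simp [f]
  have := card_le_cliqueNum hclique
  rw [Finset.card_insert_of_notMem hroot, Finset.card_map] at this
  omega

lemma colorable_corona_induce {s : Set (V ⊕ V × W)} {n : ℕ} (k : V → ℕ)
    (hbase : (G.induce (Sum.inl ⁻¹' s)).Colorable n)
    (hfiber : ∀ v, (H.induce (coronaFiber s v)).Colorable (k v))
    (hk : ∀ v, k v ≤ n) (hk_root : ∀ v, Sum.inl v ∈ s → k v < n) :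
    ((corona G H).induce s).Colorable n := by
  obtain ⟨c₀, hc₀⟩ := (SimpleGraph.colorable_iff_exists_bdd_nat_coloring n).mp hbase
  choose c hc using fun v =>
    (SimpleGraph.colorable_iff_exists_bdd_nat_coloring (k v)).mp (hfiber v)
  -- The `v`-th copy uses colours `< k v`; trading the colour of `v` for the spare colour `k v`
  -- keeps it proper and off the colour of `v`.
  let σ : V → Equiv.Perm ℕ := fun v =>
    if h : Sum.inl v ∈ s then Equiv.swap (c₀ ⟨v, h⟩) (k v) else 1
  have hσ_root (v : V) (h : Sum.inl v ∈ s) (w : coronaFiber s v) :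
      σ v (c v w) ≠ c₀ ⟨v, h⟩ := by
    simp only [σ, dif_pos h, Ne, Equiv.swap_apply_eq_iff, Equiv.swap_apply_left]
    exact (hc v w).ne
  have hσ_lt (v : V) (w : coronaFiber s v) : σ v (c v w) < n := by
    by_cases h : Sum.inl v ∈ s
    · simp only [σ, dif_pos h, Equiv.swap_apply_def]
      split_ifs
      · exact hk_root v h
      · exact hc₀ _
      · exact (hc v w).trans (hk_root v h)
    · simpa only [σ, dif_neg h, Equiv.Perm.one_apply] using (hc v w).trans_le (hk v)
  let color : s → ℕ
    | ⟨.inl v, h⟩ => c₀ ⟨v, h⟩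
    | ⟨.inr (v, w), h⟩ => σ v (c v ⟨w, h⟩)
  refine (SimpleGraph.colorable_iff_exists_bdd_nat_coloring n).mpr
    ⟨SimpleGraph.Coloring.mk color ?_, ?_⟩
  · rintro ⟨u | ⟨v, w⟩, hx⟩ ⟨u' | ⟨v', w'⟩, hy⟩ hadj
    · exact c₀.valid hadj
    · obtain rfl : u = v' := hadj
      exact (hσ_root u hx _).symm
    · obtain rfl : u' = v := hadj
      exact hσ_root u' hy _
    · obtain ⟨rfl, hww⟩ : v = v' ∧ H.Adj w w' := hadj
      exact (σ v).injective.ne ((c v).valid hww)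
  · rintro ⟨u | ⟨v, w⟩, hx⟩
    · exact hc₀ _
    · exact hσ_lt v _

lemma IsPerfect.corona [Fintype V] [Fintype W] (hG : IsPerfect G) (hH : IsPerfect H) :
    IsPerfect (corona G H) := by
  rw [isPerfect_iff_colorable] at *
  intro s
  exact colorable_corona_induce (fun v => cliqueNum (H.induce (coronaFiber s v)))
    ((hG _).mono (cliqueNum_le_of_embedding (coronaBaseEmbedding s))) (fun v => hH _)
    (fun v => cliqueNum_le_of_embedding (coronaFiberEmbedding s v))
    (fun _ => cliqueNum_coronaFiber_lt)

end Corona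

theorem corona_two_cliques_perfect_general {V : Type*} [Fintype V] (G : SimpleGraph V)
    (p q : ℕ) (hG : IsPerfect G) :
    IsPerfect (corona G
      (disjUnion (⊤ : SimpleGraph (Fin p)) (⊤ : SimpleGraph (Fin q)))) := by
  rw [disjUnion_eq_sum]
  exact hG.corona (isPerfect_top.sum isPerfect_top)

/-- if `G` is perfect then so is `G ∘ (K_p ∪ K_q)`. -/
theorem corona_two_cliques_perfect {V : Type*} [Fintype V] (G : SimpleGraph V)
    (hn : 1 ≤ Fintype.card V) (p q : ℕ) (hp : 1 ≤ p) (hq : 1 ≤ q)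
    (hG : IsPerfect G) :
    IsPerfect (corona G
      (disjUnion (⊤ : SimpleGraph (Fin p)) (⊤ : SimpleGraph (Fin q)))) :=
  corona_two_cliques_perfect_general G p q hG
end

section
/- Let a > 1 be a real number, n ≥ 1, and let P = 1 + s_1 x + ... + s_{n−1} x^{n−1} + s_n x^n + s_{n−1} x^{n+1} + ... + s_1 x^{2n−1} + x^{2n} be a symmetric polynomial of degree 2n with nonnegative coefficients that is unimodal with a unique mode (necessarily equal to n). Then Q = (1 + a x + x^2) · P is symmetric and unimodal with a unique mode, equal to n + 1. -/
open Polynomial Finset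
open scoped Classical

/-!
Let `T = 1 + a X + X²`. Since `T` and `P` are palindromic, so is `Q = T P`, of degree
`2n + 2`; by symmetry it suffices to show that the coefficients of `Q` increase up to index
`n + 1`, strictly at the last step. The increments of `Q` are the coefficients of
`(1 - X) Q = T · (1 - X) P`, and those of `(1 - X) P` are nonnegative up to index `n` because
`P` increases up to its mode `n`; as `T` has nonnegative coefficients this gives
`q_i ≤ q_{i+1}` for `i < n`. At the middle, `p_{n+1} = p_{n-1}` turns the last increment into
`(a - 1)(p_n - p_{n-1}) + (p_{n-1} - p_{n-2})`, which is positive because `a > 1` and `n` is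
the unique mode of `P`.
-/

theorem Nat.le_of_forall_le_succ_of_le {α : Type*} [Preorder α] {f : ℕ → α} {m : ℕ}
    (hmono : ∀ i < m, f i ≤ f (i + 1)) {j : ℕ} (hj : j ≤ m) : f j ≤ f m :=
  Nat.decreasingInduction (motive := fun k _ => f k ≤ f m)
    (fun k hk ih => (hmono k hk).trans ih) le_rfl hj

namespace Polynomial

theorem coeff_one_sub_X_mul_succ {R : Type*} [Ring R] (p : R[X]) (i : ℕ) :
    ((1 - X) * p).coeff (i + 1) = p.coeff (i + 1) - p.coeff i := by
  rw [sub_mul, one_mul, coeff_sub, coeff_X_mul]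

section OrderedRing

variable {R : Type*} [CommRing R] [PartialOrder R] [IsOrderedRing R]

theorem coeff_one_sub_X_mul_nonneg {p : R[X]} {m : ℕ} (h0 : 0 ≤ p.coeff 0)
    (hmono : ∀ i < m, p.coeff i ≤ p.coeff (i + 1)) {i : ℕ} (hi : i ≤ m) :
    0 ≤ ((1 - X) * p).coeff i := by
  cases i with
  | zero => simpa [mul_coeff_zero] using h0
  | succ i => exact (coeff_one_sub_X_mul_succ p i).symm ▸ sub_nonneg.2 (hmono i hi)

theorem coeff_mul_nonneg_of_le {f g : R[X]} (hf : ∀ i, 0 ≤ f.coeff i) {k : ℕ}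
    (hg : ∀ i ≤ k, 0 ≤ g.coeff i) : 0 ≤ (f * g).coeff k := by
  rw [coeff_mul]
  refine sum_nonneg fun x hx => mul_nonneg (hf _) (hg _ ?_)
  rw [HasAntidiagonal.mem_antidiagonal] at hx
  omega

theorem coeff_mul_le_coeff_mul_succ {f p : R[X]} (hf : ∀ i, 0 ≤ f.coeff i)
    (h0 : 0 ≤ p.coeff 0) {m : ℕ} (hmono : ∀ i < m, p.coeff i ≤ p.coeff (i + 1)) {i : ℕ}
    (hi : i < m) :
    (f * p).coeff i ≤ (f * p).coeff (i + 1) := by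
  rw [← sub_nonneg, ← coeff_one_sub_X_mul_succ, mul_left_comm]
  exact coeff_mul_nonneg_of_le hf fun j hj => coeff_one_sub_X_mul_nonneg h0 hmono (by omega)

end OrderedRing

theorem coeffSymmetric_iff_reverse_eq {P : ℝ[X]} : CoeffSymmetric P ↔ P.reverse = P := by
  refine ⟨fun h => ext fun i => ?_, fun h i hi => ?_⟩
  · rw [coeff_reverse]
    rcases le_or_gt i P.natDegree with hi | hi
    · rw [revAt_le hi, h i hi]
    · rw [revAt_eq_self_of_lt hi]
  · conv_lhs => rw [← h]
    rw [coeff_reverse, revAt_le hi]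

theorem CoeffSymmetric.mul {P Q : ℝ[X]} (hP : CoeffSymmetric P) (hQ : CoeffSymmetric Q) :
    CoeffSymmetric (P * Q) := by
  rw [coeffSymmetric_iff_reverse_eq] at *
  rw [reverse_mul_of_domain, hP, hQ]

theorem CoeffSymmetric.two_mul_eq_natDegree {P : ℝ[X]} (hs : CoeffSymmetric P) {k : ℕ}
    (hk : IsUniqueMode P k) : 2 * k = P.natDegree := by
  by_contra h
  have hlt := hk.2 (P.natDegree - k) (Nat.sub_le _ _) (by omega)
  rw [← hs k hk.1] at hlt
  exact lt_irrefl _ hlt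

theorem IsMode.eq_of_isUniqueMode {P : ℝ[X]} {k m : ℕ} (hk : IsMode P k)
    (hm : IsUniqueMode P m) : k = m := by
  rcases lt_trichotomy k m with h | h | h
  · have hle := hk.2.2 (m - 1) (by omega) (by have := hm.1; omega)
    rw [Nat.sub_add_cancel (by omega)] at hle
    exact absurd (hm.2 (m - 1) (by have := hm.1; omega) (by omega)) hle.not_gt
  · exact h
  · have hle := hk.2.1 m h
    exact absurd (hm.2 (m + 1) (by have := hk.1; omega) (by omega)) hle.not_gt

theorem CoeffSymmetric.isMode {P : ℝ[X]} (hs : CoeffSymmetric P) {m : ℕ}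
    (hd : P.natDegree = 2 * m) (hmono : ∀ i < m, P.coeff i ≤ P.coeff (i + 1)) : IsMode P m := by
  refine ⟨by omega, hmono, fun i hmi hi => ?_⟩
  rw [hs i hi.le, hs (i + 1) hi, hd, show 2 * m - i = 2 * m - (i + 1) + 1 by omega]
  exact hmono _ (by omega)

theorem CoeffSymmetric.isUniqueMode_succ {P : ℝ[X]} (hs : CoeffSymmetric P) {k : ℕ}
    (hd : P.natDegree = 2 * (k + 1)) (hmono : ∀ i < k, P.coeff i ≤ P.coeff (i + 1))
    (hlt : P.coeff k < P.coeff (k + 1)) : IsUniqueMode P (k + 1) := by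
  have below : ∀ j ≤ k, P.coeff j < P.coeff (k + 1) := fun j hj =>
    (Nat.le_of_forall_le_succ_of_le hmono hj).trans_lt hlt
  refine ⟨by omega, fun j hj hne => ?_⟩
  rcases le_or_gt j k with hjk | hjk
  · exact below j hjk
  · rw [hs j hj, hd]
    exact below _ (by omega)

section Quadratic

variable (a : ℝ)

theorem natDegree_one_add_C_mul_X_add_X_sq : (1 + C a * X + X ^ 2 : ℝ[X]).natDegree = 2 := by
  compute_degree!

theorem coeffSymmetric_quadratic : CoeffSymmetric (1 + C a * X + X ^ 2) := by
  intro i hi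
  rw [natDegree_one_add_C_mul_X_add_X_sq] at hi ⊢
  interval_cases i <;> simp [coeff_X, coeff_one]

theorem coeff_quadratic_nonneg (ha : 0 ≤ a) (i : ℕ) : 0 ≤ (1 + C a * X + X ^ 2).coeff i := by
  simp only [coeff_add, coeff_one, coeff_C_mul_X, coeff_X_pow]
  split_ifs <;> linarith

theorem coeff_quadratic_mul_add_two (p : ℝ[X]) (k : ℕ) :
    ((1 + C a * X + X ^ 2) * p).coeff (k + 2) =
      p.coeff (k + 2) + a * p.coeff (k + 1) + p.coeff k := by
  simp only [add_mul, one_mul, mul_assoc, coeff_add, coeff_C_mul, coeff_X_mul, coeff_X_pow_mul]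

theorem coeff_quadratic_mul_lt_succ (ha : 1 < a) {p : ℝ[X]} {k : ℕ} (h0 : 0 ≤ p.coeff 0)
    (hmono : ∀ i < k, p.coeff i ≤ p.coeff (i + 1)) (hsymm : p.coeff (k + 2) = p.coeff k)
    (hlt : p.coeff k < p.coeff (k + 1)) :
    ((1 + C a * X + X ^ 2) * p).coeff (k + 1) < ((1 + C a * X + X ^ 2) * p).coeff (k + 2) := by
  have hinc : 0 ≤ ((1 - X) * p).coeff k := coeff_one_sub_X_mul_nonneg h0 hmono le_rfl
  have hgap : 0 < (a - 1) * (p.coeff (k + 1) - p.coeff k) := mul_pos (by linarith) (by linarith)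
  rw [← sub_pos, ← coeff_one_sub_X_mul_succ, mul_left_comm, coeff_quadratic_mul_add_two,
    coeff_one_sub_X_mul_succ, coeff_one_sub_X_mul_succ, hsymm]
  linarith

end Quadratic

end Polynomial

theorem mul_quadratic_unique_mode_general (a : ℝ) (ha : 1 < a) (n : ℕ) (hn : 1 ≤ n)
    (P : Polynomial ℝ) (hPd : P.natDegree = 2 * n)
    (hP0 : P.coeff 0 = 1) (hPs : CoeffSymmetric P) (hPu : CoeffUnimodal P)
    (hPm : HasUniqueMode P) :
    CoeffSymmetric ((1 + Polynomial.C a * Polynomial.X + Polynomial.X ^ 2) * P) ∧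
      IsMode ((1 + Polynomial.C a * Polynomial.X + Polynomial.X ^ 2) * P) (n + 1) ∧
      IsUniqueMode ((1 + Polynomial.C a * Polynomial.X + Polynomial.X ^ 2) * P) (n + 1) := by
  obtain ⟨m, huniq⟩ := hPm
  obtain ⟨l, hmode⟩ := hPu
  have hmn : m = n := by have := hPs.two_mul_eq_natDegree huniq; omega
  rw [hmn] at huniq
  rw [hmode.eq_of_isUniqueMode huniq] at hmode
  obtain ⟨k, rfl⟩ : ∃ k, n = k + 1 := ⟨n - 1, by omega⟩
  have hP0' : 0 ≤ P.coeff 0 := hP0 ▸ zero_le_one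
  have hPsymm : P.coeff (k + 2) = P.coeff k := by
    rw [hPs (k + 2) (by omega), hPd]; congr 1; omega
  have hQs := (coeffSymmetric_quadratic a).mul hPs
  have hQd : ((1 + C a * X + X ^ 2) * P).natDegree = 2 * (k + 1 + 1) := by
    rw [Monic.natDegree_mul' (by monicity!) (by rintro rfl; simp at hP0),
      natDegree_one_add_C_mul_X_add_X_sq, hPd]
    ring
  have hQmono : ∀ i < k + 1, ((1 + C a * X + X ^ 2) * P).coeff i ≤
      ((1 + C a * X + X ^ 2) * P).coeff (i + 1) :=
    fun i => coeff_mul_le_coeff_mul_succ (coeff_quadratic_nonneg a (by linarith)) hP0' hmode.2.1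
  have hQlt := coeff_quadratic_mul_lt_succ a ha hP0' (fun i hi => hmode.2.1 i (by omega)) hPsymm
    (huniq.2 k (by omega) (by omega))
  refine ⟨hQs, hQs.isMode hQd fun i hi => ?_, hQs.isUniqueMode_succ hQd hQmono hQlt⟩
  rcases Nat.lt_succ_iff_lt_or_eq.1 hi with hi | rfl
  exacts [hQmono i hi, hQlt.le]

/-- if `a > 1`, `P` is symmetric of degree `2n` with nonnegative
coefficients, constant term `1`, unimodal with a unique mode, then
`Q = (1 + a x + x²) P` is symmetric and unimodal with a unique mode, equal to `n+1`. -/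
theorem mul_quadratic_unique_mode (a : ℝ) (ha : 1 < a) (n : ℕ) (hn : 1 ≤ n)
    (P : Polynomial ℝ) (hPd : P.natDegree = 2 * n) (hPc : ∀ i, 0 ≤ P.coeff i)
    (hP0 : P.coeff 0 = 1) (hPs : CoeffSymmetric P) (hPu : CoeffUnimodal P)
    (hPm : HasUniqueMode P) :
    CoeffSymmetric ((1 + Polynomial.C a * Polynomial.X + Polynomial.X ^ 2) * P) ∧
      IsMode ((1 + Polynomial.C a * Polynomial.X + Polynomial.X ^ 2) * P) (n + 1) ∧
      IsUniqueMode ((1 + Polynomial.C a * Polynomial.X + Polynomial.X ^ 2) * P) (n + 1) :=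
  mul_quadratic_unique_mode_general a ha n hn P hPd hP0 hPs hPu hPm
end

section
/- If P and Q are real polynomials with nonnegative coefficients that are both symmetric and unimodal, then their product P·Q is symmetric and unimodal. -/
open Polynomial Finset
open scoped Classical

/-!
A nonnegative coefficient sequence that is symmetric about `N / 2` and unimodal is a layer cake:
a nonnegative combination of the plateaus `X ^ i * (1 + X + ⋯ + X ^ (N - 2 i))`, all centred at
`N / 2`. The product of two plateaus is a shift of `(1 + ⋯ + X ^ a) * (1 + ⋯ + X ^ b)`, whose
coefficients `min (a, t) + 1 - (t - b)` are symmetric and unimodal about `(a + b) / 2`. Hence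
`P * Q` is a nonnegative combination of nonnegative symmetric unimodal sequences sharing the centre
`(deg P + deg Q) / 2`, and such sequences are closed under nonnegative combinations.
-/

noncomputable def plateau (n : ℕ) : ℝ[X] :=
  ∑ j ∈ range (n + 1), X ^ j

theorem coeff_plateau (n t : ℕ) : (plateau n).coeff t = if t ≤ n then 1 else 0 := by
  simp [plateau, finsetSum_coeff, coeff_X_pow]

theorem plateau_succ (n : ℕ) : plateau (n + 1) = plateau n + X ^ (n + 1) :=
  sum_range_succ _ _

/-- The number of ways to write `t = a + b` with `a ≤ s` and `b ≤ r`. -/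
theorem coeff_plateau_mul_plateau (s r t : ℕ) :
    (plateau s * plateau r).coeff t =
      ((if t ≤ s + r then min s t + 1 - (t - r) else 0 : ℕ) : ℝ) := by
  induction s with
  | zero =>
    rw [show plateau 0 = 1 by simp [plateau], one_mul, coeff_plateau, zero_add]
    split_ifs with h
    · simp [Nat.sub_eq_zero_of_le h]
    · simp
  | succ s ih =>
    rw [plateau_succ, add_mul, coeff_add, ih, mul_comm (X ^ (s + 1)), coeff_mul_X_pow',
      coeff_plateau]
    have hcount : (if t ≤ s + 1 + r then min (s + 1) t + 1 - (t - r) else 0) =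
        (if t ≤ s + r then min s t + 1 - (t - r) else 0) +
          if s + 1 ≤ t then (if t - (s + 1) ≤ r then 1 else 0) else 0 := by
      split_ifs <;> omega
    rw [hcount, Nat.cast_add]
    congr 1
    split_ifs <;> simp

noncomputable def coeffJump (R : ℝ[X]) (i : ℕ) : ℝ :=
  R.coeff i - if i = 0 then 0 else R.coeff (i - 1)

theorem sum_range_coeffJump (R : ℝ[X]) (k : ℕ) :
    ∑ i ∈ range (k + 1), coeffJump R i = R.coeff k := by
  induction k with
  | zero => simp [coeffJump]
  | succ k ih => rw [sum_range_succ, ih]; simp [coeffJump]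

/-- `N` plays the role of the degree but may exceed it, which makes the class closed under
sums. -/
structure IsSymmUnimodal (N : ℕ) (R : ℝ[X]) : Prop where
  coeff_nonneg : ∀ i, 0 ≤ R.coeff i
  coeff_eq_zero : ∀ i, N < i → R.coeff i = 0
  coeff_symm : ∀ i ≤ N, R.coeff i = R.coeff (N - i)
  coeff_le_succ : ∀ i, 2 * i + 1 ≤ N → R.coeff i ≤ R.coeff (i + 1)

namespace IsSymmUnimodal

variable {N M : ℕ} {R S : ℝ[X]}

theorem zero (N : ℕ) : IsSymmUnimodal N 0 :=
  ⟨by simp, by simp, by simp, by simp⟩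

theorem add (hR : IsSymmUnimodal N R) (hS : IsSymmUnimodal N S) : IsSymmUnimodal N (R + S) where
  coeff_nonneg i := by
    simpa only [coeff_add] using add_nonneg (hR.coeff_nonneg i) (hS.coeff_nonneg i)
  coeff_eq_zero i hi := by
    simp only [coeff_add, hR.coeff_eq_zero i hi, hS.coeff_eq_zero i hi, add_zero]
  coeff_symm i hi := by simp only [coeff_add, hR.coeff_symm i hi, hS.coeff_symm i hi]
  coeff_le_succ i hi := by
    simpa only [coeff_add] using add_le_add (hR.coeff_le_succ i hi) (hS.coeff_le_succ i hi)

theorem sum {ι : Type*} (s : Finset ι) {f : ι → ℝ[X]}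
    (h : ∀ a ∈ s, IsSymmUnimodal N (f a)) : IsSymmUnimodal N (∑ a ∈ s, f a) := by
  induction s using Finset.induction_on with
  | empty => simpa using zero N
  | insert a s ha ih =>
    rw [Finset.sum_insert ha]
    exact (h a (mem_insert_self a s)).add (ih fun b hb => h b (mem_insert_of_mem hb))

theorem C_mul {c : ℝ} (hc : 0 ≤ c) (hR : IsSymmUnimodal N R) : IsSymmUnimodal N (C c * R) where
  coeff_nonneg i := by simpa only [coeff_C_mul] using mul_nonneg hc (hR.coeff_nonneg i)
  coeff_eq_zero i hi := by simp only [coeff_C_mul, hR.coeff_eq_zero i hi, mul_zero]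
  coeff_symm i hi := by simp only [coeff_C_mul, hR.coeff_symm i hi]
  coeff_le_succ i hi := by
    simpa only [coeff_C_mul] using mul_le_mul_of_nonneg_left (hR.coeff_le_succ i hi) hc

theorem mul_X_pow (hR : IsSymmUnimodal N R) (k : ℕ) : IsSymmUnimodal (N + 2 * k) (R * X ^ k) where
  coeff_nonneg i := by
    rw [coeff_mul_X_pow']
    split_ifs
    exacts [hR.coeff_nonneg _, le_rfl]
  coeff_eq_zero i hi := by
    rw [coeff_mul_X_pow', if_pos (by omega), hR.coeff_eq_zero _ (by omega)]
  coeff_symm i hi := by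
    simp only [coeff_mul_X_pow']
    split_ifs with hik hk'
    · by_cases hiN : i ≤ N + k
      · rw [hR.coeff_symm (i - k) (by omega)]
        congr 1
        omega
      · rw [hR.coeff_eq_zero _ (by omega), hR.coeff_eq_zero _ (by omega)]
    · exact hR.coeff_eq_zero _ (by omega)
    · exact (hR.coeff_eq_zero _ (by omega)).symm
    · rfl
  coeff_le_succ i hi := by
    simp only [coeff_mul_X_pow']
    split_ifs with hik hk'
    · rw [show i + 1 - k = i - k + 1 by omega]
      exact hR.coeff_le_succ _ (by omega)
    · omega
    · exact hR.coeff_nonneg _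
    · rfl

theorem plateau_mul_plateau (s r : ℕ) :
    IsSymmUnimodal (s + r) (plateau s * plateau r) where
  coeff_nonneg i := by rw [coeff_plateau_mul_plateau]; positivity
  coeff_eq_zero i hi := by rw [coeff_plateau_mul_plateau, if_neg (by omega), Nat.cast_zero]
  coeff_symm i hi := by
    simp only [coeff_plateau_mul_plateau, if_pos hi, if_pos (Nat.sub_le _ _)]
    congr 1
    omega
  coeff_le_succ i hi := by
    simp only [coeff_plateau_mul_plateau, if_pos (by omega : i ≤ s + r),
      if_pos (by omega : i + 1 ≤ s + r)]
    exact_mod_cast (by omega)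

theorem coeffJump_nonneg (hR : IsSymmUnimodal N R) (i : ℕ) (hi : 2 * i ≤ N) :
    0 ≤ coeffJump R i := by
  unfold coeffJump
  split_ifs with h
  · simpa using hR.coeff_nonneg i
  · have := hR.coeff_le_succ (i - 1) (by omega)
    rw [Nat.sub_add_cancel (by omega)] at this
    linarith

/-- Layer-cake decomposition: the coefficient at `t ≤ N` is the telescoping sum of the jumps up
to `min t (N - t)`. -/
theorem eq_sum_plateau (hR : IsSymmUnimodal N R) :
    R = ∑ i ∈ range (N / 2 + 1), C (coeffJump R i) * (plateau (N - 2 * i) * X ^ i) := by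
  ext t
  simp only [finsetSum_coeff, coeff_C_mul, coeff_mul_X_pow', coeff_plateau, mul_ite, mul_one,
    mul_zero, ← ite_and, ← sum_filter]
  by_cases ht : t ≤ N
  · have hfilter : (range (N / 2 + 1)).filter (fun i => i ≤ t ∧ t - i ≤ N - 2 * i) =
        range (min t (N - t) + 1) := by
      ext i
      simp only [mem_filter, mem_range]
      omega
    rw [hfilter, sum_range_coeffJump]
    rcases le_total t (N - t) with h | h
    · rw [min_eq_left h]
    · rw [min_eq_right h, hR.coeff_symm t ht]
  · rw [hR.coeff_eq_zero t (by omega), eq_comm]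
    refine sum_eq_zero fun i hi => ?_
    simp only [mem_filter, mem_range] at hi
    omega

theorem mul (hR : IsSymmUnimodal N R) (hS : IsSymmUnimodal M S) :
    IsSymmUnimodal (N + M) (R * S) := by
  rw [hR.eq_sum_plateau, hS.eq_sum_plateau, sum_mul_sum]
  refine sum _ fun i hi => sum _ fun j hj => ?_
  rw [mem_range] at hi hj
  have h := ((plateau_mul_plateau (N - 2 * i) (M - 2 * j)).mul_X_pow (i + j)).C_mul <|
    mul_nonneg (hR.coeffJump_nonneg i (by omega)) (hS.coeffJump_nonneg j (by omega))
  rw [show N - 2 * i + (M - 2 * j) + 2 * (i + j) = N + M by omega] at h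
  convert h using 1
  rw [Polynomial.C_mul, pow_add]
  ring

theorem coeffUnimodal (hR : IsSymmUnimodal R.natDegree R) : CoeffUnimodal R := by
  refine ⟨R.natDegree / 2, Nat.div_le_self _ _, fun i hi => hR.coeff_le_succ i (by omega),
    fun i hi hlt => ?_⟩
  calc R.coeff (i + 1) = R.coeff (R.natDegree - (i + 1)) := hR.coeff_symm _ hlt
    _ ≤ R.coeff (R.natDegree - (i + 1) + 1) := hR.coeff_le_succ _ (by omega)
    _ = R.coeff i := by rw [show R.natDegree - (i + 1) + 1 = R.natDegree - i by omega,
      ← hR.coeff_symm i hlt.le]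

end IsSymmUnimodal

theorem isSymmUnimodal_natDegree {P : ℝ[X]} (hc : ∀ i, 0 ≤ P.coeff i) (hs : CoeffSymmetric P)
    (hu : CoeffUnimodal P) : IsSymmUnimodal P.natDegree P where
  coeff_nonneg := hc
  coeff_eq_zero _ := coeff_eq_zero_of_natDegree_lt
  coeff_symm := hs
  coeff_le_succ i hi := by
    obtain ⟨k, -, hinc, hdec⟩ := hu
    rcases lt_or_ge i k with hik | hki
    · exact hinc i hik
    have hanti : AntitoneOn P.coeff (Set.Icc k P.natDegree) :=
      antitoneOn_of_add_one_le Set.ordConnected_Icc fun a _ ha ha' => hdec a ha.1 ha'.2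
    rw [hs i (by omega)]
    exact hanti ⟨by omega, by omega⟩ ⟨by omega, by omega⟩ (by omega)

/-- the product of two symmetric and unimodal polynomials with
nonnegative coefficients is symmetric and unimodal. -/
theorem mul_symmetric_unimodal (P Q : Polynomial ℝ)
    (hPc : ∀ i, 0 ≤ P.coeff i) (hQc : ∀ i, 0 ≤ Q.coeff i)
    (hPs : CoeffSymmetric P) (hPu : CoeffUnimodal P)
    (hQs : CoeffSymmetric Q) (hQu : CoeffUnimodal Q) :
    CoeffSymmetric (P * Q) ∧ CoeffUnimodal (P * Q) := by
  have hPQ : IsSymmUnimodal (P * Q).natDegree (P * Q) := by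
    rcases eq_or_ne (P * Q) 0 with h0 | h0
    · rw [h0, natDegree_zero]
      exact .zero 0
    rw [natDegree_mul (left_ne_zero_of_mul h0) (right_ne_zero_of_mul h0)]
    exact (isSymmUnimodal_natDegree hPc hPs hPu).mul (isSymmUnimodal_natDegree hQc hQs hQu)
  exact ⟨hPQ.coeff_symm, hPQ.coeffUnimodal⟩
end
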